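/- Monotonicity of observational divergence under partial trace: Let ρ' and σ' be quantum states on ℂ^n ⊗ ℂ^m (indexed by Fin n × Fin m) with supp(ρ') ⊆ supp(σ'), and let ρ and σ be their partial traces over the second factor, i.e., ρ i j = ∑ k, ρ' (i,k) (j,k) and σ i j = ∑ k, σ' (i,k) (j,k). Then for every POVM element F on ℂ^n with Tr(Fσ) ≠ 0, Tr(Fρ)·logb 2 (Tr(Fρ)/Tr(Fσ)) ≤ D(ρ'‖σ'); i.e., D(ρ‖σ) ≤ D(ρ'‖σ'). -/

import Mathlib

open Matrix BigOperators
open scoped ComplexOrder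

noncomputable section

/-- A quantum state: positive semidefinite matrix with unit trace. -/
def IsState {d : Type*} [Fintype d] (ρ : Matrix d d ℂ) : Prop :=
  ρ.PosSemidef ∧ ρ.trace = 1

/-- `SuppLE ρ σ` : the support of `ρ` is contained in the support of `σ`,
expressed as inclusion of kernels the other way. -/
def SuppLE {d : Type*} [Fintype d] (ρ σ : Matrix d d ℂ) : Prop :=
  ∀ v : d → ℂ, σ *ᵥ v = 0 → ρ *ᵥ v = 0

/-- Matrix logarithm: apply `Real.log` to the eigenvalues (with `log 0 = 0`). -/
noncomputable def matLog {d : Type*} [Fintype d] [DecidableEq d]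
    (ρ : Matrix d d ℂ) : Matrix d d ℂ :=
  if h : ρ.IsHermitian then
    (h.eigenvectorUnitary : Matrix d d ℂ) *
      Matrix.diagonal (fun i => (Real.log (h.eigenvalues i) : ℂ)) *
      (star (h.eigenvectorUnitary : Matrix d d ℂ))
  else 0

/-- Quantum relative entropy `S(ρ‖σ) = Re Tr (ρ (log ρ - log σ))`. -/
noncomputable def relEnt {d : Type*} [Fintype d] [DecidableEq d]
    (ρ σ : Matrix d d ℂ) : ℝ :=
  (Matrix.trace (ρ * (matLog ρ - matLog σ))).re

/-- Trace norm of a Hermitian matrix: sum of absolute values of eigenvalues. -/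
noncomputable def traceNorm {d : Type*} [Fintype d] [DecidableEq d]
    (A : Matrix d d ℂ) : ℝ :=
  if h : A.IsHermitian then ∑ i, |h.eigenvalues i| else 0

/-- Rank-one operator `|ψ⟩⟨ψ|`. -/
def ketbra {d : Type*} (ψ : d → ℂ) : Matrix d d ℂ :=
  Matrix.of fun a b => ψ a * (starRingEnd ℂ) (ψ b)

/-- A POVM element: a positive semidefinite matrix `F` with `1 - F` positive semidefinite. -/
def IsPOVMElem {d : Type*} [Fintype d] [DecidableEq d] (F : Matrix d d ℂ) : Prop :=
  F.PosSemidef ∧ ((1 : Matrix d d ℂ) - F).PosSemidef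

/-- `trR F ρ = Re Tr (F ρ)`. -/
noncomputable def trR {d : Type*} [Fintype d] (F ρ : Matrix d d ℂ) : ℝ :=
  (Matrix.trace (F * ρ)).re

/-- Observational divergence `D(ρ‖σ)`. -/
noncomputable def obsDiv {d : Type*} [Fintype d] [DecidableEq d]
    (ρ σ : Matrix d d ℂ) : ℝ :=
  sSup {x : ℝ | ∃ F : Matrix d d ℂ, IsPOVMElem F ∧ trR F σ ≠ 0 ∧
    x = trR F ρ * Real.logb 2 (trR F ρ / trR F σ)}

/-- A probability distribution on `Fin n`. -/
def IsProbDist {n : ℕ} (P : Fin n → ℝ) : Prop :=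
  (∀ i, 0 ≤ P i) ∧ ∑ i, P i = 1

/-- Classical relative entropy (base 2); terms with `P i = 0` contribute `0`. -/
noncomputable def cRelEnt {n : ℕ} (P Q : Fin n → ℝ) : ℝ :=
  ∑ i, P i * Real.logb 2 (P i / Q i)

/-- Classical observational divergence. -/
noncomputable def cObsDiv {n : ℕ} (P Q : Fin n → ℝ) : ℝ :=
  sSup {x : ℝ | ∃ f : Fin n → ℝ, (∀ i, 0 ≤ f i ∧ f i ≤ 1) ∧
    (∑ i, f i * Q i) ≠ 0 ∧
    x = (∑ i, f i * P i) * Real.logb 2 ((∑ i, f i * P i) / (∑ i, f i * Q i))}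

/-!
Tensoring a POVM element `F` on the first factor with the identity gives a POVM element `F ⊗ 1`
with `Tr((F ⊗ 1) ρ') = Tr(F Tr₂ ρ')`, so every value in the supremum defining `D(ρ‖σ)` already
occurs in the one defining `D(ρ'‖σ')`. The latter supremum is finite: the support condition gives
`ρ' ≤ c σ'` for some `c`, hence `Tr(F ρ') ≤ c Tr(F σ')`, and each of its values is at most
`max 0 (logb 2 c)`.
-/

open scoped MatrixOrder Kronecker

namespace Matrix

section

variable {𝕜 d : Type*} [RCLike 𝕜] [Fintype d] [DecidableEq d]

lemma exists_le_algebraMap {A : Matrix d d 𝕜} (hA : IsSelfAdjoint A) :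
    ∃ t : ℝ, A ≤ algebraMap ℝ _ t := by
  obtain ⟨t, ht⟩ := (finite_real_spectrum (A := A)).bddAbove
  exact ⟨t, le_algebraMap_of_spectrum_le fun x hx => ht hx⟩

lemma trace_mul_nonneg {A B : Matrix d d 𝕜} (hA : 0 ≤ A) (hB : 0 ≤ B) : 0 ≤ (A * B).trace := by
  rw [← CFC.sqrt_mul_sqrt_self A hA, mul_assoc, trace_mul_comm]
  exact PosSemidef.trace_nonneg <| nonneg_iff_posSemidef.1 <|
    (CFC.sqrt_nonneg A).isSelfAdjoint.conjugate_nonneg hB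

end

def partialTraceRight {α n m : Type*} [AddCommMonoid α] [Fintype m]
    (A : Matrix (n × m) (n × m) α) : Matrix n n α :=
  of fun i j => ∑ l, A (i, l) (j, l)

section

variable {α n m : Type*} [Fintype n] [Fintype m]

lemma trace_partialTraceRight [AddCommMonoid α] (A : Matrix (n × m) (n × m) α) :
    (partialTraceRight A).trace = A.trace :=
  (Fintype.sum_prod_type fun p => A p p).symm

lemma trace_kronecker_one_mul [Semiring α] [DecidableEq m] (F : Matrix n n α)
    (A : Matrix (n × m) (n × m) α) :
    ((F ⊗ₖ (1 : Matrix m m α)) * A).trace = (F * partialTraceRight A).trace := by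
  simp only [trace, diag_apply, mul_apply, kronecker_apply, one_apply, partialTraceRight, of_apply,
    Fintype.sum_prod_type, mul_ite, mul_one, mul_zero, ite_mul, zero_mul, Finset.sum_ite_eq,
    Finset.mem_univ, if_true, Finset.mul_sum]
  exact Finset.sum_congr rfl fun i _ => Finset.sum_comm

end

end Matrix

section

variable {d : Type*} [Fintype d] [DecidableEq d]

lemma SuppLE.mul_eq_zero {ρ σ M : Matrix d d ℂ} (h : SuppLE ρ σ) (hM : σ * M = 0) :
    ρ * M = 0 := by
  refine ext_of_mulVec_single fun j => ?_
  rw [← mulVec_mulVec, h _ (by rw [mulVec_mulVec, hM, zero_mulVec]), zero_mulVec]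

/- With `s = σ^(1/2)` and its pseudo-inverse `s' = cfc (√·)⁻¹ σ` (recall `0⁻¹ = 0`),
`P = s s'` is the support projection of `σ`. The support condition gives `ρ = P ρ P`,
so `ρ = s (s' ρ s') s ≤ t s s = t σ` for any bound `s' ρ s' ≤ t`. -/
lemma SuppLE.exists_le_smul {ρ σ : Matrix d d ℂ} (hρ : 0 ≤ ρ) (hσ : 0 ≤ σ) (h : SuppLE ρ σ) :
    ∃ c : ℝ, ρ ≤ c • σ := by
  have hcont (f : ℝ → ℝ) : ContinuousOn f (spectrum ℝ σ) := σ.finite_real_spectrum.continuousOn f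
  set s := cfc Real.sqrt σ
  set s' := cfc (fun x => (Real.sqrt x)⁻¹) σ
  set P := cfc (fun x => Real.sqrt x * (Real.sqrt x)⁻¹) σ
  have hs : IsSelfAdjoint s := cfc_predicate _ σ
  have hs' : IsSelfAdjoint s' := cfc_predicate _ σ
  have hP : IsSelfAdjoint P := cfc_predicate _ σ
  have hss' : s * s' = P := (cfc_mul _ _ σ (hcont _) (hcont _)).symm
  have hs's : s' * s = P := by
    rw [← cfc_mul _ _ σ (hcont _) (hcont _)]
    exact cfc_congr fun x _ => mul_comm _ _
  have hss : s * s = σ := by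
    rw [← cfc_mul _ _ σ (hcont _) (hcont _)]
    conv_rhs => rw [← cfc_id ℝ σ]
    exact cfc_congr fun x hx => Real.mul_self_sqrt (spectrum_nonneg_of_nonneg hσ hx)
  have hσP : σ * P = σ := by
    conv_lhs => rw [← cfc_id' ℝ σ, ← cfc_mul _ _ σ (hcont _) (hcont _)]
    conv_rhs => rw [← cfc_id' ℝ σ]
    refine cfc_congr fun x hx => ?_
    rcases (spectrum_nonneg_of_nonneg hσ hx).eq_or_lt with rfl | hx
    · simp
    · simp [(Real.sqrt_pos.2 hx).ne']
  have hρP : ρ * P = ρ := by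
    have := h.mul_eq_zero (M := 1 - P) (by rw [mul_sub, mul_one, hσP, sub_self])
    rwa [mul_sub, mul_one, sub_eq_zero, eq_comm] at this
  have hPρ : P * ρ = ρ := by
    simpa [hP.star_eq, hρ.isSelfAdjoint.star_eq] using congrArg star hρP
  obtain ⟨t, ht⟩ := exists_le_algebraMap (hs'.conjugate_nonneg hρ).isSelfAdjoint
  refine ⟨t, ?_⟩
  calc ρ = s * (s' * ρ * s') * s := by
        rw [← mul_assoc, ← mul_assoc, hss', mul_assoc, hs's, hPρ, hρP]
    _ ≤ s * algebraMap ℝ _ t * s := hs.conjugate_le_conjugate ht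
    _ = t • σ := by
        rw [Algebra.algebraMap_eq_smul_one, mul_smul_comm, mul_one, smul_mul_assoc, hss]

lemma trR_nonneg {F ρ : Matrix d d ℂ} (hF : F.PosSemidef) (hρ : ρ.PosSemidef) : 0 ≤ trR F ρ :=
  (Complex.nonneg_iff.1 (trace_mul_nonneg hF.nonneg hρ.nonneg)).1

lemma trR_le_one {F ρ : Matrix d d ℂ} (hF : IsPOVMElem F) (hρ : IsState ρ) : trR F ρ ≤ 1 := by
  have h := trR_nonneg hF.2 hρ.1
  rw [trR, sub_mul, one_mul, trace_sub, hρ.2, Complex.sub_re, Complex.one_re] at h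
  exact sub_nonneg.1 h

lemma trR_le_mul_of_le_smul {F ρ σ : Matrix d d ℂ} {c : ℝ} (hF : F.PosSemidef) (h : ρ ≤ c • σ) :
    trR F ρ ≤ c * trR F σ := by
  have hnn := trR_nonneg hF h
  rwa [trR, mul_sub, trace_sub, mul_smul_comm, trace_smul, Complex.sub_re, Complex.real_smul,
    Complex.re_ofReal_mul, sub_nonneg] at hnn

end


section

variable {n m : Type*} [Fintype n] [Fintype m] [DecidableEq m]

lemma trR_kronecker_one (F : Matrix n n ℂ) (A : Matrix (n × m) (n × m) ℂ) :
    trR (F ⊗ₖ (1 : Matrix m m ℂ)) A = trR F (partialTraceRight A) := by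
  rw [trR, trR, trace_kronecker_one_mul]

lemma IsPOVMElem.kronecker_one [DecidableEq n] {F : Matrix n n ℂ} (hF : IsPOVMElem F) :
    IsPOVMElem (F ⊗ₖ (1 : Matrix m m ℂ)) := by
  refine ⟨hF.1.kronecker PosSemidef.one, ?_⟩
  have h : (1 : Matrix (n × m) (n × m) ℂ) - F ⊗ₖ 1 = (1 - F) ⊗ₖ (1 : Matrix m m ℂ) := by
    ext ⟨i, k⟩ ⟨j, l⟩
    by_cases hij : i = j <;> by_cases hkl : k = l <;> simp [one_apply, hij, hkl]
  rw [h]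
  exact hF.2.kronecker PosSemidef.one

end

lemma mul_logb_div_le_max {p q c : ℝ} (hp0 : 0 ≤ p) (hp1 : p ≤ 1) (hq : 0 < q)
    (hpc : p ≤ c * q) : p * Real.logb 2 (p / q) ≤ max 0 (Real.logb 2 c) := by
  rcases le_or_gt p q with hpq | hqp
  · exact (mul_nonpos_of_nonneg_of_nonpos hp0
      (Real.logb_nonpos one_lt_two (by positivity) ((div_le_one hq).2 hpq))).trans (le_max_left _ _)
  · calc p * Real.logb 2 (p / q) ≤ Real.logb 2 (p / q) :=
          mul_le_of_le_one_left (Real.logb_nonneg one_lt_two ((one_le_div hq).2 hqp.le)) hp1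
      _ ≤ Real.logb 2 c :=
          Real.logb_le_logb_of_le one_lt_two (div_pos (hq.trans hqp) hq) ((div_le_iff₀ hq).2 hpc)
      _ ≤ max 0 (Real.logb 2 c) := le_max_right _ _

def obsDivValues {d : Type*} [Fintype d] [DecidableEq d] (ρ σ : Matrix d d ℂ) : Set ℝ :=
  {x | ∃ F : Matrix d d ℂ, IsPOVMElem F ∧ trR F σ ≠ 0 ∧
    x = trR F ρ * Real.logb 2 (trR F ρ / trR F σ)}

section

variable {d : Type*} [Fintype d] [DecidableEq d]

lemma obsDiv_eq_sSup (ρ σ : Matrix d d ℂ) : obsDiv ρ σ = sSup (obsDivValues ρ σ) := rfl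

lemma bddAbove_obsDivValues {ρ σ : Matrix d d ℂ} (hρ : IsState ρ) (hσ : σ.PosSemidef)
    (h : SuppLE ρ σ) : BddAbove (obsDivValues ρ σ) := by
  obtain ⟨c, hc⟩ := h.exists_le_smul hρ.1.nonneg hσ.nonneg
  refine ⟨max 0 (Real.logb 2 c), ?_⟩
  rintro _ ⟨F, hF, hFσ, rfl⟩
  exact mul_logb_div_le_max (trR_nonneg hF.1 hρ.1) (trR_le_one hF hρ)
    ((trR_nonneg hF.1 hσ).lt_of_ne' hFσ) (trR_le_mul_of_le_smul hF.1 hc)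

lemma obsDivValues_nonempty (ρ : Matrix d d ℂ) {σ : Matrix d d ℂ} (hσ : σ.trace = 1) :
    (obsDivValues ρ σ).Nonempty :=
  ⟨_, 1, ⟨PosSemidef.one, by simpa using PosSemidef.zero⟩, by simp [trR, hσ], rfl⟩

end

lemma obsDivValues_partialTraceRight_subset {n m : Type*} [Fintype n] [DecidableEq n] [Fintype m]
    [DecidableEq m] (ρ σ : Matrix (n × m) (n × m) ℂ) :
    obsDivValues (partialTraceRight ρ) (partialTraceRight σ) ⊆ obsDivValues ρ σ := by
  rintro _ ⟨F, hF, hFσ, rfl⟩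
  exact ⟨F ⊗ₖ 1, hF.kronecker_one, by rwa [trR_kronecker_one],
    by rw [trR_kronecker_one, trR_kronecker_one]⟩

/-- Monotonicity of observational divergence under partial trace. -/
theorem obsDiv_partialTrace_mono {n m : ℕ}
    (ρ' σ' : Matrix (Fin n × Fin m) (Fin n × Fin m) ℂ)
    (hρ' : IsState ρ') (hσ' : IsState σ') (hsupp : SuppLE ρ' σ')
    (ρ σ : Matrix (Fin n) (Fin n) ℂ)
    (hρ : ∀ i j, ρ i j = ∑ l : Fin m, ρ' (i, l) (j, l))
    (hσ : ∀ i j, σ i j = ∑ l : Fin m, σ' (i, l) (j, l)) :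
    (∀ F : Matrix (Fin n) (Fin n) ℂ, IsPOVMElem F → trR F σ ≠ 0 →
      trR F ρ * Real.logb 2 (trR F ρ / trR F σ) ≤ obsDiv ρ' σ') ∧
    obsDiv ρ σ ≤ obsDiv ρ' σ' := by
  obtain rfl : ρ = partialTraceRight ρ' := ext hρ
  obtain rfl : σ = partialTraceRight σ' := ext hσ
  have hsub := obsDivValues_partialTraceRight_subset ρ' σ'
  have hbdd := bddAbove_obsDivValues hρ' hσ'.1 hsupp
  have hne : (obsDivValues (partialTraceRight ρ') (partialTraceRight σ')).Nonempty :=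
    obsDivValues_nonempty _ (by rw [trace_partialTraceRight, hσ'.2])
  rw [obsDiv_eq_sSup, obsDiv_eq_sSup]
  exact ⟨fun F hF hFσ => le_csSup hbdd (hsub ⟨F, hF, hFσ, rfl⟩), csSup_le_csSup hbdd hne hsub⟩

end
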